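/- arXiv:2511.17782 — 5 statements merged into one kernel-verified Lean document; each statement's English description precedes it below -/
import Mathlib

section
/- Let Q be the Laplace distribution on ℝ with density Q(s) = e^{-|s|}/2. Then there exists a universal constant C such that for every b ∈ ℝ, the expectation over s ~ Q of (N(s; b, 1)/Q(s))² is at most C·e^{|b|}, where N(s; b, 1) = (1/√(2π))·e^{-(s-b)²/2} is the Gaussian density with mean b and variance 1. In fact one may take C = 2e^{1/4}/√π. -/
open MeasureTheory Real

/-- Gaussian density with mean `b` and unit variance. -/
noncomputable def gaussDensity (b s : ℝ) : ℝ :=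
  (1 / Real.sqrt (2 * Real.pi)) * Real.exp (-(s - b) ^ 2 / 2)

/-- Laplace density `e^{-|s|}/2`. -/
noncomputable def laplaceDensity (s : ℝ) : ℝ := Real.exp (-|s|) / 2

/-!
Writing out the densities, the integrand is `exp (|s| - (s - b)²) / π`. Bounding
`exp |s| ≤ exp s + exp (-s)` splits the integral into two Gaussian integrals, and completing
the square gives `∫ exp (± s - (s - b)²) = √π · exp (± b + 1/4)`. Finally
`exp b + exp (-b) ≤ 2 exp |b|`.
-/

lemma gaussDensity_div_laplaceDensity_sq_mul (b s : ℝ) :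
    (gaussDensity b s / laplaceDensity s) ^ 2 * laplaceDensity s
      = exp (|s| - (s - b) ^ 2) / π := by
  have hsqrt : √(2 * π) ^ 2 = 2 * π := sq_sqrt (by positivity)
  have hexp : exp (-(s - b) ^ 2 / 2) ^ 2 * exp |s| = exp (|s| - (s - b) ^ 2) := by
    rw [← exp_nat_mul, ← exp_add]; ring_nf
  unfold gaussDensity laplaceDensity
  rw [exp_neg, ← hexp]
  field_simp
  rw [hsqrt]

lemma exp_mul_sub_sq_eq (b c s : ℝ) :
    exp (c * s - (s - b) ^ 2) = exp (c * b + c ^ 2 / 4) * exp (-1 * (s - (b + c / 2)) ^ 2) := by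
  rw [← exp_add]; ring_nf

lemma integrable_exp_mul_sub_sq (b c : ℝ) : Integrable fun s => exp (c * s - (s - b) ^ 2) := by
  simp_rw [exp_mul_sub_sq_eq b c]
  exact ((integrable_exp_neg_mul_sq one_pos).comp_sub_right _).const_mul _

lemma integral_exp_mul_sub_sq (b c : ℝ) :
    ∫ s, exp (c * s - (s - b) ^ 2) = √π * exp (c * b + c ^ 2 / 4) := by
  simp_rw [exp_mul_sub_sq_eq b c]
  rw [integral_const_mul, integral_sub_right_eq_self (fun s => exp (-1 * s ^ 2)),
    integral_gaussian, div_one, mul_comm]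

lemma integral_exp_abs_sub_sq_le (b : ℝ) :
    ∫ s, exp (|s| - (s - b) ^ 2) ≤ 2 * √π * exp (1 / 4) * exp |b| := by
  have hsplit : ∀ s, exp (|s| - (s - b) ^ 2)
      ≤ exp (1 * s - (s - b) ^ 2) + exp (-1 * s - (s - b) ^ 2) := fun s => by
    simpa only [sub_eq_add_neg, exp_add, ← add_mul, one_mul, neg_one_mul] using
      mul_le_mul_of_nonneg_right (exp_abs_le s) (exp_pos (-(s - b) ^ 2)).le
  have hexp_add_exp_neg : exp b + exp (-b) ≤ 2 * exp |b| := by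
    have := exp_le_exp.mpr (le_abs_self b)
    have := exp_le_exp.mpr (neg_le_abs b)
    linarith
  calc ∫ s, exp (|s| - (s - b) ^ 2)
      ≤ ∫ s, (exp (1 * s - (s - b) ^ 2) + exp (-1 * s - (s - b) ^ 2)) :=
        integral_mono_of_nonneg (.of_forall fun s => (exp_pos _).le)
          ((integrable_exp_mul_sub_sq b 1).add (integrable_exp_mul_sub_sq b (-1)))
          (.of_forall hsplit)
    _ = √π * exp (1 / 4) * (exp b + exp (-b)) := by
        rw [integral_add (integrable_exp_mul_sub_sq b 1) (integrable_exp_mul_sub_sq b (-1)),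
          integral_exp_mul_sub_sq, integral_exp_mul_sub_sq, exp_add, exp_add]
        ring_nf
    _ ≤ 2 * √π * exp (1 / 4) * exp |b| := by
        have : 0 ≤ √π * exp (1 / 4) := by positivity
        nlinarith

/-- The second moment of the Gaussian/Laplace likelihood ratio under the Laplace
distribution is at most `C · e^{|b|}` with `C = 2 e^{1/4} / √π`. -/
theorem stmt_0 :
    ∃ C : ℝ, C = 2 * Real.exp (1 / 4) / Real.sqrt Real.pi ∧
      ∀ b : ℝ,
        (∫ s : ℝ, (gaussDensity b s / laplaceDensity s) ^ 2 * laplaceDensity s) ≤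
          C * Real.exp |b| := by
  refine ⟨_, rfl, fun b => ?_⟩
  have hπ : √π ^ 2 = π := sq_sqrt pi_pos.le
  simp_rw [gaussDensity_div_laplaceDensity_sq_mul, integral_div]
  calc (∫ s, exp (|s| - (s - b) ^ 2)) / π
      ≤ 2 * √π * exp (1 / 4) * exp |b| / π := by gcongr; exact integral_exp_abs_sub_sq_le b
    _ = 2 * exp (1 / 4) / √π * exp |b| := by
        field_simp
        linear_combination hπ
end

section
/- Let x be a real random variable satisfying P[|x| > t] ≤ 2·e^{-(t/λ)^{1+α}} for all t > 0, with α, λ > 0. Then for any a > 0, E[e^{a|x|}] ≤ 3·e^{2^{1/α}·(aλ)^{1+1/α}}. -/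
open MeasureTheory Real

/-- Exponential moments of an `(α,λ)`-strictly sub-exponential random variable:
if `P[|x| > t] ≤ 2·e^{-(t/λ)^{1+α}}` for all `t > 0`, then for any `a > 0`,
`E[e^{a|x|}] ≤ 3·e^{2^{1/α}(aλ)^{1+1/α}}`. -/
theorem stmt_2 {Ω : Type*} [MeasurableSpace Ω] (μ : Measure Ω) [IsProbabilityMeasure μ]
    (X : Ω → ℝ) (α lam : ℝ) (hα : 0 < α) (hlam : 0 < lam)
    (htail : ∀ t : ℝ, 0 < t →
      μ {ω | t < |X ω|} ≤ ENNReal.ofReal (2 * Real.exp (-(t / lam) ^ (1 + α))))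
    (a : ℝ) (ha : 0 < a) :
    (∫ ω, Real.exp (a * |X ω|) ∂μ) ≤
      3 * Real.exp (2 ^ (1 / α) * (a * lam) ^ (1 + 1 / α)) := by
  have h2a : (0:ℝ) < 2 * a := by linarith
  set T : ℝ := (2*a) ^ (1/α) * lam ^ (1 + 1/α) with hT
  have hTpos : 0 < T := mul_pos (rpow_pos_of_pos h2a _) (rpow_pos_of_pos hlam _)
  have haT : a * T = 2 ^ (1/α) * (a*lam) ^ (1 + 1/α) := by
    rw [hT, mul_rpow (by norm_num : (0:ℝ) ≤ 2) ha.le, mul_rpow ha.le hlam.le,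
      show (1 + 1/α) = 1/α + 1 by ring, rpow_add ha, rpow_one]
    ring
  set s₀ : ℝ := Real.exp (a * T) with hs₀
  have hs₀pos : 0 < s₀ := exp_pos _
  have hs₀one : 1 ≤ s₀ := one_le_exp (by positivity)
  rw [← haT]
  set f : Ω → ℝ := fun ω => Real.exp (a * |X ω|) with hf
  by_cases hint : Integrable f μ
  swap
  · rw [integral_undef hint]; positivity
  have hf_nn : ∀ ω, 0 ≤ f ω := fun ω => (exp_pos _).le
  rw [integral_eq_lintegral_of_nonneg_ae (Filter.Eventually.of_forall hf_nn)
    hint.aestronglyMeasurable]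
  rw [lintegral_eq_lintegral_meas_lt μ (Filter.Eventually.of_forall hf_nn)
    hint.aemeasurable]
  refine ENNReal.toReal_le_of_le_ofReal (by positivity) ?_
  rw [← Set.Ioc_union_Ioi_eq_Ioi hs₀pos.le,
    lintegral_union measurableSet_Ioi (Set.Ioc_disjoint_Ioi le_rfl)]
  have h1 : ∫⁻ t in Set.Ioc 0 s₀, μ {ω | t < f ω} ≤ ENNReal.ofReal s₀ := by
    calc ∫⁻ t in Set.Ioc 0 s₀, μ {ω | t < f ω}
        ≤ ∫⁻ _ in Set.Ioc 0 s₀, 1 := lintegral_mono fun t => prob_le_one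
      _ = ENNReal.ofReal s₀ := by
          rw [setLIntegral_one, Real.volume_Ioc, sub_zero]
  have h2 : ∫⁻ t in Set.Ioi s₀, μ {ω | t < f ω} ≤ ENNReal.ofReal 2 := by
    have hb : ∀ t ∈ Set.Ioi s₀, μ {ω | t < f ω} ≤ ENNReal.ofReal (2 * t ^ (-2:ℝ)) := by
      intro t ht
      have hts : s₀ < t := ht
      have ht1 : (1:ℝ) < t := lt_of_le_of_lt hs₀one hts
      have htpos : (0:ℝ) < t := by linarith
      have hlogt : a * T < Real.log t := by
        rwa [← Real.exp_lt_exp, Real.exp_log htpos, ← hs₀]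
      set u : ℝ := Real.log t / a with hu
      have huT : T < u := by rw [hu, lt_div_iff₀ ha]; linarith [hlogt]
      have hupos : 0 < u := hTpos.trans huT
      have hset : {ω | t < f ω} = {ω | u < |X ω|} := by
        ext ω
        simp only [Set.mem_setOf_eq, hf, hu]
        rw [div_lt_iff₀ ha, ← Real.exp_log htpos, Real.exp_lt_exp, Real.log_exp, mul_comm]
      rw [hset]
      refine (htail u hupos).trans ?_
      apply ENNReal.ofReal_le_ofReal
      have hkey : 2 * a * u ≤ (u / lam) ^ (1 + α) := by
        have hTlam : (T / lam) ^ α = 2 * a * lam := by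
          have : T / lam = (2*a) ^ (1/α) * lam ^ (1/α) := by
            rw [hT, show (1 + 1/α) = 1/α + 1 by ring, rpow_add hlam, rpow_one]
            field_simp
          rw [this, mul_rpow (rpow_pos_of_pos h2a _).le (rpow_pos_of_pos hlam _).le,
            ← rpow_mul h2a.le, ← rpow_mul hlam.le, one_div, inv_mul_cancel₀ hα.ne',
            rpow_one, rpow_one]
        have hmono : (T / lam) ^ α ≤ (u / lam) ^ α :=
          rpow_le_rpow (by positivity) (by gcongr) hα.le
        have : (u / lam) ^ (1 + α) = (u / lam) * (u / lam) ^ α := by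
          rw [rpow_add (by positivity), rpow_one]
        rw [this]
        calc 2 * a * u = (u / lam) * (2 * a * lam) := by field_simp
          _ ≤ (u / lam) * (u / lam) ^ α := by
              apply mul_le_mul_of_nonneg_left _ (by positivity)
              rw [← hTlam]; exact hmono
      have hexp : Real.exp (-(u / lam) ^ (1 + α)) ≤ t ^ (-2:ℝ) := by
        have : Real.exp (-(u / lam) ^ (1 + α)) ≤ Real.exp (-(2 * a * u)) :=
          Real.exp_le_exp.mpr (by linarith)
        refine this.trans_eq ?_
        rw [Real.rpow_def_of_pos htpos]
        congr 1
        rw [hu]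
        field_simp
      linarith
    calc ∫⁻ t in Set.Ioi s₀, μ {ω | t < f ω}
        ≤ ∫⁻ t in Set.Ioi s₀, ENNReal.ofReal (2 * t ^ (-2:ℝ)) :=
          setLIntegral_mono_ae (by fun_prop) (Filter.Eventually.of_forall hb)
      _ = ENNReal.ofReal (∫ t in Set.Ioi s₀, 2 * t ^ (-2:ℝ)) := by
          rw [← ofReal_integral_eq_lintegral_ofReal
            ((integrableOn_Ioi_rpow_of_lt (by norm_num) hs₀pos).const_mul 2)
            ((ae_restrict_iff' measurableSet_Ioi).mpr (Filter.Eventually.of_forall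
              fun t ht => by have h := hs₀pos.trans ht; positivity))]
      _ ≤ ENNReal.ofReal 2 := by
          apply ENNReal.ofReal_le_ofReal
          rw [MeasureTheory.integral_const_mul, integral_Ioi_rpow_of_lt (by norm_num) hs₀pos]
          have : -s₀ ^ ((-2:ℝ) + 1) / ((-2:ℝ) + 1) = s₀⁻¹ := by
            norm_num
            rw [rpow_neg_one]
          rw [this]
          have : s₀⁻¹ ≤ 1 := inv_le_one_of_one_le₀ hs₀one
          linarith
  calc (∫⁻ t in Set.Ioc 0 s₀, μ {ω | t < f ω}) + ∫⁻ t in Set.Ioi s₀, μ {ω | t < f ω}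
      ≤ ENNReal.ofReal s₀ + ENNReal.ofReal 2 := add_le_add h1 h2
    _ = ENNReal.ofReal (s₀ + 2) := (ENNReal.ofReal_add hs₀pos.le (by norm_num)).symm
    _ ≤ ENNReal.ofReal (3 * s₀) := ENNReal.ofReal_le_ofReal (by linarith)
end

section
/- Let Q be the Laplace distribution with density Q(s) = e^{−|s|}/2, and let b ∈ ℝ. Then for any threshold T > 0, E_{s~Q}[(N(s;b,1)/Q(s))·1[|s| > T]] ≤ √(C·e^{|b|}·e^{−T}) for a universal constant C, where N(s;b,1) is the unit-variance Gaussian density with mean b. In particular this is at most C'·e^{|b|/2}·e^{−T/2} for a universal constant C'. -/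
open MeasureTheory Real

lemma integral_exp_neg_half_Ioi (a : ℝ) :
    ∫ x in Set.Ioi a, Real.exp (-x / 2) = 2 * Real.exp (-(a / 2)) := by
  have h := integral_comp_mul_right_Ioi (fun y => Real.exp (-y)) a (b := 1/2) (by norm_num)
  simp only [smul_eq_mul] at h
  have h2 : (fun x : ℝ => Real.exp (-x / 2)) = fun x : ℝ => Real.exp (-(x * (1/2))) := by
    funext x; ring_nf
  rw [h2]
  rw [h, integral_exp_neg_Ioi]
  norm_num
  congr 1
  ring

lemma gauss_le_bound (b s : ℝ) :
    gaussDensity b s ≤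
      Real.exp (1/8) / Real.sqrt (2 * Real.pi) * Real.exp (|b| / 2) * Real.exp (-|s| / 2) := by
  unfold gaussDensity
  have h1 : -(s - b) ^ 2 / 2 ≤ 1/8 + |b| / 2 + -|s| / 2 := by
    nlinarith [sq_abs (s - b), abs_sub_abs_le_abs_sub s b, sq_nonneg (|s - b| - 1/2)]
  calc (1 / Real.sqrt (2 * Real.pi)) * Real.exp (-(s - b) ^ 2 / 2)
      ≤ (1 / Real.sqrt (2 * Real.pi)) * Real.exp (1/8 + |b| / 2 + -|s| / 2) := by
        apply mul_le_mul_of_nonneg_left (Real.exp_le_exp.2 h1) (by positivity)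
    _ = Real.exp (1/8) / Real.sqrt (2 * Real.pi) * Real.exp (|b| / 2) * Real.exp (-|s| / 2) := by
        rw [Real.exp_add, Real.exp_add]; ring

lemma gauss_integrable (b : ℝ) : Integrable (gaussDensity b) := by
  have h := (integrable_exp_neg_mul_sq (by norm_num : (0:ℝ) < 1/2)).comp_sub_right b
  have h2 := h.const_mul (1 / Real.sqrt (2 * Real.pi))
  apply h2.congr
  filter_upwards with s
  unfold gaussDensity
  congr 1
  ring_nf

/-- Tail truncation of the Gaussian/Laplace likelihood ratio: there are universal
constants `C, C'` such that for every `b` and every `T > 0`,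
`E_{s~Q}[(N(s;b,1)/Q(s))·1[|s| > T]] ≤ √(C·e^{|b|}·e^{-T}) ≤ C'·e^{|b|/2}·e^{-T/2}`. -/
theorem stmt_9 :
    ∃ C : ℝ, 0 < C ∧ ∃ C' : ℝ, 0 < C' ∧
      ∀ b T : ℝ, 0 < T →
        (∫ s : ℝ,
            (if T < |s| then gaussDensity b s / laplaceDensity s else 0) *
              laplaceDensity s) ≤
          Real.sqrt (C * Real.exp |b| * Real.exp (-T)) ∧
        Real.sqrt (C * Real.exp |b| * Real.exp (-T)) ≤
          C' * Real.exp (|b| / 2) * Real.exp (-T / 2) := by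
  refine ⟨100, by norm_num, 10, by norm_num, fun b T hT => ?_⟩
  set K : ℝ := Real.exp (1/8) / Real.sqrt (2 * Real.pi) * Real.exp (|b| / 2) with hK
  have hKpos : 0 < K := by positivity
  -- sqrt simplification
  have hsqrt : Real.sqrt (100 * Real.exp |b| * Real.exp (-T))
      = 10 * Real.exp (|b| / 2) * Real.exp (-T / 2) := by
    rw [show (100 : ℝ) * Real.exp |b| * Real.exp (-T)
        = (10 * Real.exp (|b| / 2) * Real.exp (-T / 2)) ^ 2 by
      rw [show Real.exp |b| = Real.exp (|b|/2) * Real.exp (|b|/2) by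
            rw [← Real.exp_add]; congr 1; ring,
          show Real.exp (-T) = Real.exp (-T/2) * Real.exp (-T/2) by
            rw [← Real.exp_add]; congr 1; ring]
      ring]
    exact Real.sqrt_sq (by positivity)
  constructor
  · -- main inequality
    have hlap : ∀ s : ℝ, laplaceDensity s ≠ 0 := fun s => by
      unfold laplaceDensity; positivity
    have hA : MeasurableSet (Set.Iio (-T) ∪ Set.Ioi T) :=
      measurableSet_Iio.union measurableSet_Ioi
    have hEq : (fun s : ℝ =>
        (if T < |s| then gaussDensity b s / laplaceDensity s else 0) * laplaceDensity s)
        = (Set.Iio (-T) ∪ Set.Ioi T).indicator (gaussDensity b) := by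
      funext s
      have hmem : s ∈ Set.Iio (-T) ∪ Set.Ioi T ↔ T < |s| := by
        simp [Set.mem_Iio, Set.mem_Ioi, lt_abs, lt_neg, or_comm]
      by_cases h : T < |s|
      · rw [if_pos h, Set.indicator_of_mem (hmem.2 h), div_mul_cancel₀ _ (hlap s)]
      · rw [if_neg h, Set.indicator_of_notMem (fun hs => h (hmem.1 hs)), zero_mul]
    rw [hEq, integral_indicator hA]
    have hg := gauss_integrable b
    have hdisj : Disjoint (Set.Iio (-T)) (Set.Ioi T) := by
      rw [Set.disjoint_left]
      intro x hx hx'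
      simp only [Set.mem_Iio, Set.mem_Ioi] at hx hx'
      linarith
    rw [setIntegral_union hdisj measurableSet_Ioi hg.integrableOn hg.integrableOn]
    -- integrability of the bounding function on Ioi T
    have hint : IntegrableOn (fun s : ℝ => K * Real.exp (-|s| / 2)) (Set.Ioi T) := by
      have h := ((exp_neg_integrableOn_Ioi T (by norm_num : (0:ℝ) < 1/2)).const_mul K)
      apply IntegrableOn.congr_fun h ?_ measurableSet_Ioi
      intro x hx
      simp only
      rw [abs_of_pos (hT.trans hx)]
      ring_nf
    -- value of the bounding integral
    have hval : ∫ s in Set.Ioi T, K * Real.exp (-|s| / 2) = K * (2 * Real.exp (-(T / 2))) := by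
      rw [integral_const_mul]
      congr 1
      rw [← integral_exp_neg_half_Ioi T]
      apply setIntegral_congr_fun measurableSet_Ioi
      intro x hx
      simp only
      rw [abs_of_pos (hT.trans hx)]
    -- right piece
    have hb1 : ∫ s in Set.Ioi T, gaussDensity b s ≤ K * (2 * Real.exp (-(T / 2))) := by
      rw [← hval]
      apply setIntegral_mono_on hg.integrableOn hint measurableSet_Ioi
      intro s _
      exact gauss_le_bound b s
    -- left piece
    have hb2 : ∫ s in Set.Iio (-T), gaussDensity b s ≤ K * (2 * Real.exp (-(T / 2))) := by
      have hio : ∫ s in Set.Iio (-T), gaussDensity b s = ∫ s in Set.Iic (-T), gaussDensity b s :=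
        setIntegral_congr_set Iio_ae_eq_Iic
      rw [hio, ← integral_comp_neg_Ioi]
      rw [← hval]
      apply setIntegral_mono_on (hg.comp_neg.integrableOn) hint measurableSet_Ioi
      intro s _
      calc gaussDensity b (-s) ≤ K * Real.exp (-|(-s)| / 2) := gauss_le_bound b (-s)
        _ = K * Real.exp (-|s| / 2) := by rw [abs_neg]
    have hKle : K ≤ 5/2 * Real.exp (|b| / 2) := by
      have h1 : Real.exp (1/8 : ℝ) ≤ 3 := by
        calc Real.exp (1/8 : ℝ) ≤ Real.exp 1 := Real.exp_le_exp.2 (by norm_num)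
          _ ≤ 3 := Real.exp_one_lt_d9.le.trans (by norm_num)
      have h2 : (3:ℝ)/2 ≤ Real.sqrt (2 * Real.pi) := by
        rw [show (3:ℝ)/2 = Real.sqrt ((3/2)^2) from (Real.sqrt_sq (by norm_num)).symm]
        apply Real.sqrt_le_sqrt
        nlinarith [Real.pi_gt_three]
      have h3 : Real.exp (1/8) / Real.sqrt (2 * Real.pi) ≤ 5/2 := by
        rw [div_le_iff₀ (by positivity)]
        nlinarith
      rw [hK]
      exact mul_le_mul_of_nonneg_right h3 (Real.exp_nonneg _)
    rw [hsqrt]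
    have hfinal : K * (2 * Real.exp (-(T/2))) + K * (2 * Real.exp (-(T/2)))
        ≤ 10 * Real.exp (|b| / 2) * Real.exp (-T / 2) := by
      have he : Real.exp (-(T/2)) = Real.exp (-T/2) := by congr 1; ring
      rw [he]
      nlinarith [Real.exp_pos (-T/2), Real.exp_nonneg (|b|/2)]
    linarith
  · rw [hsqrt]
end

section
/- Let u ∈ ℝⁿ with |u₁| ≥ |u₂| ≥ ⋯ ≥ |uₙ|, and suppose the coordinates indexed by G = {i₁ < i₂ < ⋯ < i_t} satisfy |u_{i_{k+1}}| ≤ |u_{i_k}|/3 for all k ∈ [t−1]. Then for any two distinct points x₁ ≠ x₂ ∈ {±1}^t, |⟨u_G, x₁⟩ − ⟨u_G, x₂⟩| ≥ |u_{i_t}|, where u_G = (u_{i₁}, …, u_{i_t}). -/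
open Real Finset

private lemma geom_tail (a : ℕ → ℝ) (ha : ∀ k, 0 ≤ a k)
    (hd : ∀ k, a (k + 1) ≤ a k / 3) :
    ∀ n j, ∑ k ∈ Finset.Ico (j + 1) (j + 1 + n), a k ≤ a j / 2 := by
  intro n
  induction n with
  | zero => intro j; simp; linarith [ha j]
  | succ n ih =>
    intro j
    have h1 : j + 1 < j + 1 + (n + 1) := by omega
    rw [Finset.sum_eq_sum_Ico_succ_bot h1]
    have h2 : ∑ k ∈ Finset.Ico (j + 1 + 1) (j + 1 + (n + 1)), a k ≤ a (j + 1) / 2 := by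
      have := ih (j + 1)
      have he : j + 1 + 1 + n = j + 1 + (n + 1) := by omega
      rwa [he] at this
    have := hd j
    linarith

/-- Well-separatedness of sums with geometrically decaying weights: if
`|v₁| ≥ ... ≥` decay by factors of 3 (`|v_{k+1}| ≤ |v_k|/3`), then for any two
distinct points `x₁ ≠ x₂ ∈ {±1}^t`, `|⟨v,x₁⟩ - ⟨v,x₂⟩| ≥ |v_t|` (the last weight). -/
theorem stmt_11 (t : ℕ) (ht : 0 < t) (v : Fin t → ℝ)
    (hdecay : ∀ k : ℕ, ∀ h : k + 1 < t,
      |v ⟨k + 1, h⟩| ≤ |v ⟨k, Nat.lt_of_succ_lt h⟩| / 3)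
    (x₁ x₂ : Fin t → ℝ)
    (hx₁ : ∀ i, x₁ i = 1 ∨ x₁ i = -1) (hx₂ : ∀ i, x₂ i = 1 ∨ x₂ i = -1)
    (hne : x₁ ≠ x₂) :
    |v ⟨t - 1, Nat.sub_lt ht Nat.one_pos⟩| ≤
      |(∑ i, v i * x₁ i) - ∑ i, v i * x₂ i| := by
  classical
  -- minimal index where x₁ and x₂ differ
  have hS : (Finset.univ.filter fun i : Fin t => x₁ i ≠ x₂ i).Nonempty := by
    by_contra h
    rw [Finset.not_nonempty_iff_eq_empty, Finset.filter_eq_empty_iff] at h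
    exact hne (funext fun i => by have := h (Finset.mem_univ i); simpa using this)
  set j := (Finset.univ.filter fun i : Fin t => x₁ i ≠ x₂ i).min' hS with hjdef
  have hjmem := Finset.min'_mem _ hS
  have hjne : x₁ j ≠ x₂ j := by
    have := Finset.mem_filter.mp hjmem; exact this.2
  have hjmin : ∀ i : Fin t, x₁ i ≠ x₂ i → j ≤ i := fun i hi =>
    Finset.min'_le _ _ (Finset.mem_filter.mpr ⟨Finset.mem_univ i, hi⟩)
  -- extensions to ℕ
  set a : ℕ → ℝ := fun k => if h : k < t then |v ⟨k, h⟩| else 0 with hadef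
  set g : ℕ → ℝ := fun k => if h : k < t then v ⟨k, h⟩ * (x₁ ⟨k, h⟩ - x₂ ⟨k, h⟩) else 0
    with hgdef
  have ha : ∀ k, 0 ≤ a k := by
    intro k; simp only [hadef]; split
    · exact abs_nonneg _
    · exact le_refl 0
  have hdec : ∀ k, a (k + 1) ≤ a k / 3 := by
    intro k
    simp only [hadef]
    by_cases h : k + 1 < t
    · rw [dif_pos h, dif_pos (Nat.lt_of_succ_lt h)]
      exact hdecay k h
    · rw [dif_neg h]
      split
      · positivity
      · norm_num
  have hgabs : ∀ k, |g k| ≤ 2 * a k := by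
    intro k
    simp only [hgdef, hadef]
    by_cases h : k < t
    · rw [dif_pos h, dif_pos h, abs_mul]
      have : |x₁ ⟨k, h⟩ - x₂ ⟨k, h⟩| ≤ 2 := by
        rcases hx₁ ⟨k, h⟩ with h1 | h1 <;> rcases hx₂ ⟨k, h⟩ with h2 | h2 <;>
          rw [h1, h2] <;> norm_num
      calc |v ⟨k, h⟩| * |x₁ ⟨k, h⟩ - x₂ ⟨k, h⟩| ≤ |v ⟨k, h⟩| * 2 := by
            exact mul_le_mul_of_nonneg_left this (abs_nonneg _)
        _ = 2 * |v ⟨k, h⟩| := by ring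
    · rw [dif_neg h, dif_neg h]; norm_num
  have hgj : |g j.val| = 2 * a j.val := by
    simp only [hgdef, hadef]
    rw [dif_pos j.isLt, dif_pos j.isLt, abs_mul]
    have hj' : (⟨j.val, j.isLt⟩ : Fin t) = j := rfl
    rw [hj']
    have : |x₁ j - x₂ j| = 2 := by
      rcases hx₁ j with h1 | h1 <;> rcases hx₂ j with h2 | h2
      · exact absurd (h1.trans h2.symm) hjne
      · rw [h1, h2]; norm_num
      · rw [h1, h2]; norm_num
      · exact absurd (h1.trans h2.symm) hjne
    rw [this]; ring
  have hg0 : ∀ k ∈ Finset.Ico 0 j.val, g k = 0 := by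
    intro k hk
    rw [Finset.mem_Ico] at hk
    have hkt : k < t := lt_trans hk.2 j.isLt
    have heq : x₁ ⟨k, hkt⟩ = x₂ ⟨k, hkt⟩ := by
      by_contra hc
      have := hjmin ⟨k, hkt⟩ hc
      have : j.val ≤ k := this
      omega
    simp only [hgdef]
    rw [dif_pos hkt, heq]
    ring
  -- rewrite the sum
  have hsum : (∑ i, v i * x₁ i) - ∑ i, v i * x₂ i = ∑ k ∈ Finset.range t, g k := by
    rw [← Finset.sum_sub_distrib]
    rw [← Fin.sum_univ_eq_sum_range g t]
    refine Finset.sum_congr rfl fun i _ => ?_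
    simp only [hgdef]
    rw [dif_pos i.isLt]
    have : (⟨i.val, i.isLt⟩ : Fin t) = i := rfl
    rw [this]; ring
  have hjlt : j.val < t := j.isLt
  have hsplit : ∑ k ∈ Finset.range t, g k
      = g j.val + ∑ k ∈ Finset.Ico (j.val + 1) t, g k := by
    rw [Finset.range_eq_Ico, ← Finset.sum_Ico_consecutive g (Nat.zero_le j.val) (le_of_lt hjlt),
      Finset.sum_eq_zero hg0, zero_add, Finset.sum_eq_sum_Ico_succ_bot hjlt]
  -- tail bound
  have htail : ∑ k ∈ Finset.Ico (j.val + 1) t, |g k| ≤ a j.val := by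
    calc ∑ k ∈ Finset.Ico (j.val + 1) t, |g k|
        ≤ ∑ k ∈ Finset.Ico (j.val + 1) t, 2 * a k :=
          Finset.sum_le_sum fun k _ => hgabs k
      _ = 2 * ∑ k ∈ Finset.Ico (j.val + 1) t, a k := by rw [Finset.mul_sum]
      _ ≤ 2 * (a j.val / 2) := by
          have he : j.val + 1 + (t - (j.val + 1)) = t := by omega
          have := geom_tail a ha hdec (t - (j.val + 1)) j.val
          rw [he] at this
          linarith
      _ = a j.val := by ring
  -- monotonicity: a (t-1) ≤ a j
  have hanti : Antitone a := antitone_nat_of_succ_le fun k => by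
    have := hdec k; have := ha k; linarith
  have hlast : a (t - 1) ≤ a j.val := hanti (by omega)
  have hlasteq : a (t - 1) = |v ⟨t - 1, Nat.sub_lt ht Nat.one_pos⟩| := by
    simp only [hadef]
    rw [dif_pos (Nat.sub_lt ht Nat.one_pos)]
  -- conclude
  rw [hsum, hsplit, ← hlasteq]
  have h1 : |∑ k ∈ Finset.Ico (j.val + 1) t, g k|
      ≤ ∑ k ∈ Finset.Ico (j.val + 1) t, |g k| := Finset.abs_sum_le_sum_abs _ _
  have h2 : |g j.val| - |∑ k ∈ Finset.Ico (j.val + 1) t, g k|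
      ≤ |g j.val + ∑ k ∈ Finset.Ico (j.val + 1) t, g k| := by
    have := abs_add_le (g j.val + ∑ k ∈ Finset.Ico (j.val + 1) t, g k)
      (-(∑ k ∈ Finset.Ico (j.val + 1) t, g k))
    simp at this
    linarith [abs_neg (∑ k ∈ Finset.Ico (j.val + 1) t, g k)]
  linarith [hgj, htail, h1, h2]
end

section
/- Let X be a mean-zero random variable taking values in [−1, 1], let p be any real polynomial of degree at most d, and suppose Y ∈ {±1}. If h(x) = sign(p(x) − t) for some threshold t ∈ [−1,1] chosen uniformly at random, then E_t[1[h(X) ≠ Y]] ≤ (1/2)·|Y − p(X)|, and hence there exists a fixed threshold t achieving (1/N)·Σⱼ 1[sign(p(xʲ) − t) ≠ yʲ] ≤ (1/(2N))·Σⱼ |yʲ − p(xʲ)| on any finite sample {(xʲ, yʲ)}ⱼ₌₁^N with yʲ ∈ {±1}. -/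
/-!
For `y = 1` the rounded label `sign(v - t)` is wrong exactly when `t > v`, and for `y = -1`
exactly when `t ≤ v`; within `[-1, 1]` these sets have length at most `|y - v|`, so a uniform
threshold errs with probability at most `|y - v| / 2`. Summing over the sample, the average over
`t` of the empirical error is at most `(1 / (2N)) Σⱼ |yⱼ - vⱼ|`, so some threshold does no worse.
-/

open MeasureTheory Real Finset

/-- The 0-1 loss of the threshold classifier `t ↦ sign(v - t)` (with `sign 0 = 1`) on label `y`. -/
noncomputable def thresholdLoss (v y t : ℝ) : ℝ :=
  if (if 0 ≤ v - t then (1:ℝ) else -1) ≠ y then 1 else 0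

lemma thresholdLoss_one (v : ℝ) : thresholdLoss v 1 = (Set.Ioi v).indicator 1 := by
  funext t
  by_cases h : t ≤ v <;> simp [thresholdLoss, h, sub_nonneg, show (-1:ℝ) ≠ 1 by norm_num, not_le.1]

lemma thresholdLoss_neg_one (v : ℝ) : thresholdLoss v (-1) = (Set.Iic v).indicator 1 := by
  funext t
  by_cases h : t ≤ v <;> simp [thresholdLoss, h, sub_nonneg, show (1:ℝ) ≠ -1 by norm_num]

lemma integrableOn_thresholdLoss {μ : Measure ℝ} {s : Set ℝ} (hs : μ s ≠ ⊤) {v y : ℝ}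
    (hy : y = 1 ∨ y = -1) : IntegrableOn (thresholdLoss v y) s μ := by
  rcases hy with rfl | rfl
  · rw [thresholdLoss_one]
    exact (integrableOn_const hs).indicator measurableSet_Ioi
  · rw [thresholdLoss_neg_one]
    exact (integrableOn_const hs).indicator measurableSet_Iic

lemma setIntegral_thresholdLoss_le {v y : ℝ} (hy : y = 1 ∨ y = -1) :
    ∫ t in Set.Icc (-1:ℝ) 1, thresholdLoss v y t ≤ |y - v| := by
  rcases hy with rfl | rfl
  · rw [thresholdLoss_one, integral_indicator_one measurableSet_Ioi,
      measureReal_restrict_apply measurableSet_Ioi]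
    calc volume.real (Set.Ioi v ∩ Set.Icc (-1) 1)
        ≤ volume.real (Set.Ioc v 1) :=
          measureReal_mono (fun t ⟨hvt, _, ht1⟩ => ⟨hvt, ht1⟩) (by simp)
      _ ≤ |1 - v| := by
          rw [Real.volume_real_Ioc]; exact max_le (le_abs_self _) (abs_nonneg _)
  · rw [thresholdLoss_neg_one, integral_indicator_one measurableSet_Iic,
      measureReal_restrict_apply measurableSet_Iic]
    calc volume.real (Set.Iic v ∩ Set.Icc (-1) 1)
        ≤ volume.real (Set.Icc (-1) v) :=
          measureReal_mono (fun t ⟨htv, ht1, _⟩ => ⟨ht1, htv⟩) (by simp)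
      _ ≤ |-1 - v| := by
          rw [Real.volume_real_Icc, abs_sub_comm]
          exact max_le (by simpa using le_abs_self (v + 1)) (abs_nonneg _)

lemma exists_mem_measureReal_mul_sum_le_sum_setIntegral {α ι : Type*} [MeasurableSpace α]
    {μ : Measure α} {s : Set α} (hs₀ : μ s ≠ 0) (hs : μ s ≠ ⊤) (S : Finset ι) {f : ι → α → ℝ}
    (hf : ∀ i ∈ S, IntegrableOn (f i) s μ) :
    ∃ x ∈ s, μ.real s * ∑ i ∈ S, f i x ≤ ∑ i ∈ S, ∫ a in s, f i a ∂μ := by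
  obtain ⟨x, hxs, hx⟩ := exists_le_setAverage hs₀ hs (integrable_finsetSum S hf)
  rw [setAverage_eq, smul_eq_mul, integral_finsetSum S hf] at hx
  exact ⟨x, hxs, (le_inv_mul_iff₀ (ENNReal.toReal_pos hs₀ hs)).1 hx⟩

/-- Randomized-threshold rounding for L₁ polynomial regression: for `y ∈ {±1}` and any
real value `v`, the probability over a uniform threshold `t ∈ [-1,1]` that
`sign(v - t) ≠ y` is at most `|y - v|/2`; consequently, on any finite sample with
labels `yⱼ ∈ {±1}` and predicted values `vⱼ = p(xʲ)`, some fixed threshold `t ∈ [-1,1]`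
achieves empirical 0-1 error at most `(1/(2N))·Σⱼ |yⱼ - vⱼ|`. -/
theorem stmt_19 :
    (∀ v y : ℝ, (y = 1 ∨ y = -1) →
      (1 / 2) * (∫ t in Set.Icc (-1:ℝ) 1,
          (if (if 0 ≤ v - t then (1:ℝ) else -1) ≠ y then (1:ℝ) else 0)) ≤
        |y - v| / 2) ∧
    (∀ (N : ℕ), 0 < N → ∀ (v y : Fin N → ℝ), (∀ j, y j = 1 ∨ y j = -1) →
      ∃ t : ℝ, t ∈ Set.Icc (-1:ℝ) 1 ∧
        (1 / (N : ℝ)) * (∑ j, if (if 0 ≤ v j - t then (1:ℝ) else -1) ≠ y j then (1:ℝ) else 0) ≤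
          (1 / (2 * (N : ℝ))) * ∑ j, |y j - v j|) := by
  refine ⟨fun v y hy => ?_, fun N hN v y hy => ?_⟩
  · have := setIntegral_thresholdLoss_le (v := v) hy
    unfold thresholdLoss at this
    linarith
  · have hvol : volume.real (Set.Icc (-1:ℝ) 1) = 2 := by norm_num
    obtain ⟨t, ht, hle⟩ := exists_mem_measureReal_mul_sum_le_sum_setIntegral
      (μ := volume) (s := Set.Icc (-1:ℝ) 1) (by simp) (by simp) univ
      (f := fun j => thresholdLoss (v j) (y j))
      fun j _ => integrableOn_thresholdLoss (by simp) (hy j)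
    have hsum : 2 * ∑ j, thresholdLoss (v j) (y j) t ≤ ∑ j, |y j - v j| := by
      rw [← hvol]
      exact hle.trans (sum_le_sum fun j _ => setIntegral_thresholdLoss_le (hy j))
    refine ⟨t, ht, ?_⟩
    have hN' : (0:ℝ) < N := by exact_mod_cast hN
    rw [div_mul_eq_mul_div, div_mul_eq_mul_div, one_mul, one_mul,
      div_le_div_iff₀ hN' (by positivity)]
    unfold thresholdLoss at hsum
    nlinarith
end
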